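/- arXiv:2404.10091 — 10 statements merged into one kernel-verified Lean document; each statement's English description precedes it below -/
import Mathlib

section
/- Let m ≥ 1, let p : Fin m → ℝ satisfy 0 ≤ p i ≤ 1 for all i and ∏_{i} (1 - p i) < 1, let η ∈ (0,1), let s ≥ 1 be a natural number, and let u : Fin m → EuclideanSpace ℝ (Fin d). Define the sequence e : ℕ → EuclideanSpace ℝ (Fin d) by e 0 = 0 and e (t+1) = Σ_{A ⊆ Fin m} w_p(A) · (if A = ∅ then e t else (1-η)^s • e t + ((1 - (1-η)^s)/|A|) • Σ_{i ∈ A} u i), where the sum ranges over all finite subsets A of Fin m. Then e t converges, as t → ∞, to (1/(1 - ∏_{i}(1 - p i))) • Σ_{i} p i · (1 + Σ_{j=2}^{m} (-1)^{j+1} (1/j) Σ_{S ⊆ Fin m \ {i}, |S| = j-1} ∏_{z ∈ S} p z) • u i. -/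
open Finset

/-!
Each round acts on `e t` as the affine map `x ↦ α • x + (1 - α) • T` with
`α = r + (1 - r) P₀`, where `r = (1 - η) ^ s` and `P₀ = ∏ i, (1 - p i)`; since `|α| < 1`,
`e t → T`. The coefficient of `u i` in `T` is `p i / (1 - P₀)` times the expectation of
`1 / (1 + |S|)` over the random set `S` of the other active clients. Writing
`1 / (1 + k) = ∫₀¹ x ^ k dx` turns this expectation into `∫₀¹ ∏_{z ≠ i} (p z x + 1 - p z) dx`;
the substitution `x ↦ 1 - x` gives `∫₀¹ ∏_{z ≠ i} (1 - p z x) dx`, whose expansion is the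
alternating sum.
-/noncomputable def bernoulliWeight {ι : Type*} [Fintype ι] [DecidableEq ι] (p : ι → ℝ)
    (A : Finset ι) : ℝ :=
  (∏ i ∈ A, p i) * ∏ i ∈ Aᶜ, (1 - p i)

lemma intervalIntegral_prod_mul_add {ι : Type*} [DecidableEq ι] (B : Finset ι) (a b : ι → ℝ) :
    ∫ x in (0 : ℝ)..1, ∏ z ∈ B, (a z * x + b z)
      = ∑ S ∈ B.powerset, (∏ z ∈ S, a z) * (∏ z ∈ B \ S, b z) / (S.card + 1) := by
  have expand (x : ℝ) : ∏ z ∈ B, (a z * x + b z)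
      = ∑ S ∈ B.powerset, ((∏ z ∈ S, a z) * ∏ z ∈ B \ S, b z) * x ^ S.card := by
    rw [prod_add]
    refine sum_congr rfl fun S _ => ?_
    rw [prod_mul_distrib, prod_const]
    ring
  simp_rw [expand]
  rw [intervalIntegral.integral_finsetSum fun S _ =>
    (by fun_prop : Continuous _).intervalIntegrable 0 1]
  simp [div_eq_mul_inv]

lemma sum_powerset_prod_mul_prod_one_sub_div {ι : Type*} [DecidableEq ι] (B : Finset ι)
    (q : ι → ℝ) :
    ∑ S ∈ B.powerset, (∏ z ∈ S, q z) * (∏ z ∈ B \ S, (1 - q z)) / (S.card + 1)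
      = ∑ S ∈ B.powerset, (-1) ^ S.card * (∏ z ∈ S, q z) / (S.card + 1) := by
  have reflect (x : ℝ) : ∏ z ∈ B, (q z * x + (1 - q z)) = ∏ z ∈ B, (-q z * (1 - x) + 1) :=
    prod_congr rfl fun z _ => by ring
  have h := intervalIntegral.integral_comp_sub_left (a := 0) (b := 1)
    (fun x => ∏ z ∈ B, (-q z * x + 1)) 1
  simp only [← reflect, sub_zero, sub_self, intervalIntegral_prod_mul_add, prod_neg,
    prod_const_one, mul_one] at h
  exact h

lemma sum_powerset_neg_one_pow_mul_div_card_succ {ι : Type*} [DecidableEq ι] {m : ℕ}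
    {B : Finset ι} (hB : B.card < m) (c : Finset ι → ℝ) :
    ∑ S ∈ B.powerset, (-1) ^ S.card * c S / (S.card + 1)
      = c ∅ + ∑ j ∈ Icc 2 m, (-1 : ℝ) ^ (j + 1) * (1 / (j : ℝ)) *
          ∑ S ∈ B.powerset.filter (fun S => S.card = j - 1), c S := by
  set g : Finset ι → ℝ := fun S => (-1) ^ S.card * c S / (S.card + 1)
  have fiber_one : ∑ S ∈ B.powerset with S.card + 1 = 1, g S = c ∅ := by
    simp [g, card_eq_zero, filter_eq']
  have fiber (j : ℕ) (hj : j ∈ Icc 2 m) : ∑ S ∈ B.powerset with S.card + 1 = j, g S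
      = (-1 : ℝ) ^ (j + 1) * (1 / (j : ℝ)) * ∑ S ∈ B.powerset with S.card = j - 1, c S := by
    have hj2 : 2 ≤ j := (mem_Icc.1 hj).1
    rw [mul_sum]
    refine sum_congr (filter_congr fun S _ => by omega) fun S hS => ?_
    obtain rfl : j = S.card + 1 := by have := (mem_filter.1 hS).2; omega
    simp only [g, pow_succ]
    push_cast
    ring
  have maps_to : ∀ S ∈ B.powerset, S.card + 1 ∈ Icc 1 m := fun S hS => by
    have := card_le_card (mem_powerset.1 hS)
    simp only [mem_Icc]
    omega
  rw [← sum_fiberwise_of_maps_to maps_to g, ← insert_Icc_add_one_left_eq_Icc (by omega),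
    sum_insert (by simp), fiber_one]
  exact congrArg _ (sum_congr rfl fiber)

lemma sum_smul_sum_eq_sum_sum_filter_smul {ι R E : Type*} [Fintype ι] [DecidableEq ι]
    [Semiring R] [AddCommMonoid E] [Module R E] (g : Finset ι → R) (u : ι → E) :
    ∑ A, g A • ∑ i ∈ A, u i = ∑ i, (∑ A with i ∈ A, g A) • u i := by
  simp_rw [smul_sum, sum_smul, sum_filter]
  rw [sum_comm' (t' := univ) (s' := fun i => univ.filter (i ∈ ·)) (by simp)]
  simp [sum_filter]

lemma tendsto_of_affine_recurrence {E : Type*} [AddCommGroup E] [Module ℝ E]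
    [TopologicalSpace E] [ContinuousAdd E] [ContinuousSMul ℝ E] {x : ℕ → E} {a : ℝ} {c : E}
    (ha : |a| < 1) (hx : ∀ t, x (t + 1) = a • x t + (1 - a) • c) :
    Filter.Tendsto x Filter.atTop (nhds c) := by
  have closed (t : ℕ) : x t = c + a ^ t • (x 0 - c) := by
    induction t with
    | zero => simp
    | succ t ih =>
      rw [hx, ih, pow_succ', mul_smul, smul_sub, sub_smul, one_smul, smul_add]
      abel
  simpa [← closed] using
    ((tendsto_pow_atTop_nhds_zero_of_abs_lt_one ha).smul_const (x 0 - c)).const_add c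

section bernoulliWeight

variable {ι : Type*} [Fintype ι] [DecidableEq ι] (p : ι → ℝ)

lemma bernoulliWeight_empty : bernoulliWeight p ∅ = ∏ i, (1 - p i) := by
  simp [bernoulliWeight]

lemma sum_bernoulliWeight : ∑ A, bernoulliWeight p A = 1 := by
  simp_rw [bernoulliWeight, compl_eq_univ_sdiff, ← powerset_univ, ← prod_add]
  simp

lemma sum_filter_mem_bernoulliWeight_div_card_eq_mul_sum_powerset_erase (i : ι) :
    ∑ A with i ∈ A, bernoulliWeight p A / A.card
      = p i * ∑ S ∈ (univ.erase i).powerset,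
          (∏ z ∈ S, p z) * (∏ z ∈ univ.erase i \ S, (1 - p z)) / (S.card + 1) := by
  set B := univ.erase i
  have not_mem (S) (hS : S ∈ B.powerset) : i ∉ S :=
    fun h => notMem_erase i univ (mem_powerset.1 hS h)
  rw [sum_filter, ← powerset_univ, ← insert_erase (mem_univ i),
    sum_powerset_insert (notMem_erase i univ), sum_eq_zero fun S hS => if_neg (not_mem S hS),
    zero_add, mul_sum]
  refine sum_congr rfl fun S hS => ?_
  rw [if_pos (mem_insert_self i S), bernoulliWeight, prod_insert (not_mem S hS), compl_insert,
    card_insert_of_notMem (not_mem S hS), compl_eq_univ_sdiff, erase_sdiff_comm]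
  push_cast
  ring

lemma sum_filter_mem_bernoulliWeight_div_card {m : ℕ} (hm : Fintype.card ι ≤ m) (i : ι) :
    ∑ A with i ∈ A, bernoulliWeight p A / A.card
      = p i * (1 + ∑ j ∈ Icc 2 m, (-1 : ℝ) ^ (j + 1) * (1 / (j : ℝ)) *
          ∑ S ∈ (univ.erase i).powerset.filter (fun S => S.card = j - 1), ∏ z ∈ S, p z) := by
  have hcard : (univ.erase i).card < m := by
    rw [card_erase_of_mem (mem_univ i), card_univ]
    have := Fintype.card_pos_iff.2 ⟨i⟩
    omega
  rw [sum_filter_mem_bernoulliWeight_div_card_eq_mul_sum_powerset_erase,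
    sum_powerset_prod_mul_prod_one_sub_div,
    sum_powerset_neg_one_pow_mul_div_card_succ hcard (fun S => ∏ z ∈ S, p z), prod_empty]

lemma sum_bernoulliWeight_smul_ite {E : Type*} [AddCommGroup E] [Module ℝ E] (r : ℝ)
    (u : ι → E) (v : E) :
    ∑ A, bernoulliWeight p A •
        (if A = ∅ then v else r • v + ((1 - r) / (A.card : ℝ)) • ∑ i ∈ A, u i)
      = (r + (1 - r) * ∏ i, (1 - p i)) • v
        + (1 - r) • ∑ i, (∑ A with i ∈ A, bernoulliWeight p A / A.card) • u i := by
  have split (A : Finset ι) : bernoulliWeight p A •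
        (if A = ∅ then v else r • v + ((1 - r) / (A.card : ℝ)) • ∑ i ∈ A, u i)
      = (r * bernoulliWeight p A + (1 - r) * if A = ∅ then bernoulliWeight p A else 0) • v
        + (1 - r) • (bernoulliWeight p A / A.card) • ∑ i ∈ A, u i := by
    split_ifs with hA
    · rw [hA, sum_empty, smul_zero, smul_zero, add_zero]
      congr 1
      ring
    · simp only [smul_add, smul_smul]
      congr 2 <;> ring
  simp_rw [split, sum_add_distrib, ← sum_smul, ← smul_sum, sum_add_distrib, ← mul_sum,
    sum_ite_eq', mem_univ, if_true, sum_bernoulliWeight, bernoulliWeight_empty,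
    sum_smul_sum_eq_sum_sum_filter_smul]
  ring_nf

end bernoulliWeight

theorem fedavg_bias_general
    (m d : ℕ) (p : Fin m → ℝ)
    (hp : ∀ i, 0 ≤ p i ∧ p i ≤ 1)
    (hprod : ∏ i, (1 - p i) < 1)
    (η : ℝ) (hη : 0 < η ∧ η < 1)
    (s : ℕ) (hs : 1 ≤ s)
    (u : Fin m → EuclideanSpace ℝ (Fin d))
    (e : ℕ → EuclideanSpace ℝ (Fin d))
    (herec : ∀ t, e (t + 1) =
      ∑ A : Finset (Fin m),
        ((∏ i ∈ A, p i) * ∏ i ∈ Aᶜ, (1 - p i)) •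
          (if A = ∅ then e t
           else (1 - η) ^ s • e t
             + ((1 - (1 - η) ^ s) / (A.card : ℝ)) • ∑ i ∈ A, u i)) :
    Filter.Tendsto e Filter.atTop
      (nhds ((1 / (1 - ∏ i, (1 - p i))) •
        ∑ i, (p i * (1 + ∑ j ∈ Finset.Icc 2 m,
          (-1 : ℝ) ^ (j + 1) * (1 / (j : ℝ)) *
            ∑ S ∈ (Finset.univ.erase i).powerset.filter (fun S => S.card = j - 1),
              ∏ z ∈ S, p z)) • u i)) := by
  set P₀ := ∏ i, (1 - p i)
  set r := (1 - η) ^ s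
  have hr₀ : 0 ≤ r := pow_nonneg (by linarith) s
  have hr₁ : r < 1 := pow_lt_one₀ (by linarith) (by linarith) (by omega)
  have hP₀ : 0 ≤ P₀ := prod_nonneg fun i _ => by linarith [(hp i).2]
  have hα : |r + (1 - r) * P₀| < 1 := abs_lt.2 ⟨by nlinarith, by nlinarith⟩
  refine tendsto_of_affine_recurrence hα fun t => ?_
  rw [herec t]
  refine (sum_bernoulliWeight_smul_ite p r u (e t)).trans ?_
  simp_rw [sum_filter_mem_bernoulliWeight_div_card p (Fintype.card_fin m).le, smul_smul]
  congr 2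
  field_simp [show 1 - P₀ ≠ 0 by linarith]
  ring

/-- FedAvg with non-uniform client participation probabilities converges in
expectation to a biased point (Proposition 1). -/
theorem fedavg_bias
    (m d : ℕ) (hm : 1 ≤ m) (p : Fin m → ℝ)
    (hp : ∀ i, 0 ≤ p i ∧ p i ≤ 1)
    (hprod : ∏ i, (1 - p i) < 1)
    (η : ℝ) (hη : 0 < η ∧ η < 1)
    (s : ℕ) (hs : 1 ≤ s)
    (u : Fin m → EuclideanSpace ℝ (Fin d))
    (e : ℕ → EuclideanSpace ℝ (Fin d))
    (he0 : e 0 = 0)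
    (herec : ∀ t, e (t + 1) =
      ∑ A : Finset (Fin m),
        ((∏ i ∈ A, p i) * ∏ i ∈ Aᶜ, (1 - p i)) •
          (if A = ∅ then e t
           else (1 - η) ^ s • e t
             + ((1 - (1 - η) ^ s) / (A.card : ℝ)) • ∑ i ∈ A, u i)) :
    Filter.Tendsto e Filter.atTop
      (nhds ((1 / (1 - ∏ i, (1 - p i))) •
        ∑ i, (p i * (1 + ∑ j ∈ Finset.Icc 2 m,
          (-1 : ℝ) ^ (j + 1) * (1 / (j : ℝ)) *
            ∑ S ∈ (Finset.univ.erase i).powerset.filter (fun S => S.card = j - 1),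
              ∏ z ∈ S, p z)) • u i)) :=
  fedavg_bias_general m d p hp hprod η hη s hs u e herec
end

section
/- Let m ≥ 1, let p : Fin m → ℝ satisfy 0 ≤ p i ≤ 1 for all i, and let u : Fin m → EuclideanSpace ℝ (Fin d). Then Σ_{A ⊆ Fin m, A ≠ ∅} w_p(A) · (1/|A|) • Σ_{i ∈ A} u i = Σ_{i} p i · (1 + Σ_{j=2}^{m} (-1)^{j+1} (1/j) Σ_{S ⊆ Fin m \ {i}, |S| = j-1} ∏_{z ∈ S} p z) • u i, where the outer sum on the left ranges over all nonempty finite subsets A of Fin m. -/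
/-!
Grouping the left side by index, the coefficient of `u i` is `p i` times the expectation of
`1 / (|B| + 1)`, where `B` is the random subset of the other indices. Writing
`1 / (k + 1) = ∫₀¹ tᵏ dt` turns this expectation into `∫₀¹ ∏_{z ≠ i} (p z t + 1 - p z) dt`; the
substitution `t ↦ 1 - t` makes the integrand `∏_{z ≠ i} (1 - p z t)`, and expanding this product
and integrating term by term gives the inclusion–exclusion sum.
-/

open Finset

lemma integral_sum_mul_pow {ι : Type*} (s : Finset ι) (a : ι → ℝ) (n : ι → ℕ) :
    ∫ t in (0 : ℝ)..1, ∑ x ∈ s, a x * t ^ n x = ∑ x ∈ s, a x / (n x + 1) := by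
  rw [intervalIntegral.integral_finsetSum fun x _ =>
    (by fun_prop : Continuous fun t : ℝ => a x * t ^ n x).intervalIntegrable 0 1]
  refine sum_congr rfl fun x _ => ?_
  simp [integral_pow, div_eq_mul_inv]

variable {ι : Type*}

section

variable [DecidableEq ι]

lemma sum_powerset_prod_mul_prod_sdiff_div_card_succ_eq_integral (q : ι → ℝ) (T : Finset ι) :
    ∑ B ∈ T.powerset, (∏ z ∈ B, q z) * (∏ z ∈ T \ B, (1 - q z)) / (#B + 1) =
      ∫ t in (0 : ℝ)..1, ∏ z ∈ T, (q z * t + (1 - q z)) := by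
  simp_rw [prod_add, prod_mul_distrib, prod_const, mul_right_comm _ (_ ^ _)]
  rw [integral_sum_mul_pow]

lemma sum_powerset_neg_one_pow_mul_prod_div_card_succ_eq_integral (q : ι → ℝ) (T : Finset ι) :
    ∑ C ∈ T.powerset, (-1) ^ #C * (∏ z ∈ C, q z) / (#C + 1) =
      ∫ t in (0 : ℝ)..1, ∏ z ∈ T, (1 - q z * t) := by
  simp_rw [prod_sub, prod_const_one, mul_one, prod_mul_distrib, prod_const, ← mul_assoc]
  rw [integral_sum_mul_pow]

lemma sum_powerset_weight_div_card_succ (q : ι → ℝ) (T : Finset ι) :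
    ∑ B ∈ T.powerset, (∏ z ∈ B, q z) * (∏ z ∈ T \ B, (1 - q z)) / (#B + 1) =
      ∑ C ∈ T.powerset, (-1) ^ #C * (∏ z ∈ C, q z) / (#C + 1) := by
  have reflect := intervalIntegral.integral_comp_sub_left (a := 0) (b := 1)
    (fun t => ∏ z ∈ T, (1 - q z * t)) 1
  rw [sub_zero, sub_self] at reflect
  rw [sum_powerset_prod_mul_prod_sdiff_div_card_succ_eq_integral,
    sum_powerset_neg_one_pow_mul_prod_div_card_succ_eq_integral, ← reflect]
  congr 1 with t
  exact prod_congr rfl fun z _ => by ring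

lemma sum_smul_sum_eq_sum_sum_filter_mem {R M : Type*} [Fintype ι] [Semiring R]
    [AddCommMonoid M] [Module R M] (c : Finset ι → R) (u : ι → M) :
    ∑ A : Finset ι, c A • ∑ i ∈ A, u i = ∑ i, (∑ A with i ∈ A, c A) • u i := by
  simp_rw [smul_sum, sum_smul]
  exact sum_comm' (by simp)

lemma sum_filter_mem_eq_sum_powerset_erase {M : Type*} [Fintype ι] [AddCommMonoid M]
    (i : ι) (f : Finset ι → M) :
    ∑ A with i ∈ A, f A = ∑ B ∈ (univ.erase i).powerset, f (insert i B) := by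
  calc ∑ A with i ∈ A, f A
      = ∑ A ∈ (insert i (univ.erase i)).powerset, if i ∈ A then f A else 0 := by
        rw [insert_erase (mem_univ i), powerset_univ, sum_filter]
    _ = ∑ B ∈ (univ.erase i).powerset, f (insert i B) := by
        have hi := notMem_erase i (univ : Finset ι)
        rw [sum_powerset_insert hi, sum_eq_zero fun B hB =>
          if_neg (notMem_of_mem_powerset_of_notMem hB hi), zero_add]
        simp only [mem_insert_self, if_true]

lemma sum_filter_mem_weight_div_card [Fintype ι] (p : ι → ℝ) (i : ι) :
    ∑ A with i ∈ A, (∏ z ∈ A, p z) * (∏ z ∈ Aᶜ, (1 - p z)) * (1 / #A) =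
      p i * ∑ B ∈ (univ.erase i).powerset,
        (∏ z ∈ B, p z) * (∏ z ∈ univ.erase i \ B, (1 - p z)) / (#B + 1) := by
  rw [sum_filter_mem_eq_sum_powerset_erase, mul_sum]
  refine sum_congr rfl fun B hB => ?_
  have hiB : i ∉ B := notMem_of_mem_powerset_of_notMem hB (notMem_erase i univ)
  have hcompl : (insert i B)ᶜ = univ.erase i \ B := by
    ext z
    simp only [mem_compl, mem_insert, mem_sdiff, mem_erase, mem_univ, and_true]
    tauto
  rw [prod_insert hiB, hcompl, card_insert_of_notMem hiB]
  push_cast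
  ring

end

lemma sum_powerset_neg_one_pow_mul_prod_div_card_succ_eq_one_add_sum_Icc
    (q : ι → ℝ) (T : Finset ι) :
    ∑ C ∈ T.powerset, (-1) ^ #C * (∏ z ∈ C, q z) / (#C + 1) =
      1 + ∑ j ∈ Icc 2 (#T + 1), (-1 : ℝ) ^ (j + 1) * (1 / (j : ℝ)) *
        ∑ S ∈ T.powerset with #S = j - 1, ∏ z ∈ S, q z := by
  rw [sum_powerset, sum_range_succ', add_comm, ← Ico_add_one_right_eq_Icc, sum_Ico_eq_sum_range,
    show #T + 1 + 1 - 2 = #T by omega]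
  simp only [powersetCard_zero, sum_singleton, card_empty, prod_empty]
  norm_num only [pow_zero, CharP.cast_eq_zero, zero_add, div_one, mul_one]
  refine congrArg _ (sum_congr rfl fun k _ => ?_)
  rw [show 2 + k - 1 = k + 1 by omega, ← powersetCard_eq_filter, mul_sum]
  refine sum_congr rfl fun C hC => ?_
  rw [(mem_powersetCard.mp hC).2]
  push_cast
  ring

theorem expected_active_average_general
    (m d : ℕ) (p : Fin m → ℝ)
    (u : Fin m → EuclideanSpace ℝ (Fin d)) :
    ∑ A ∈ Finset.univ.filter (fun A : Finset (Fin m) => A ≠ ∅),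
      ((∏ i ∈ A, p i) * ∏ i ∈ Aᶜ, (1 - p i)) •
        ((1 / (A.card : ℝ)) • ∑ i ∈ A, u i)
    = ∑ i, (p i * (1 + ∑ j ∈ Finset.Icc 2 m,
        (-1 : ℝ) ^ (j + 1) * (1 / (j : ℝ)) *
          ∑ S ∈ (Finset.univ.erase i).powerset.filter (fun S => S.card = j - 1),
            ∏ z ∈ S, p z)) • u i := by
  rw [sum_filter_of_ne fun A _ hA => by rintro rfl; simp at hA]
  simp_rw [smul_smul]
  rw [sum_smul_sum_eq_sum_sum_filter_mem]
  refine sum_congr rfl fun i _ => ?_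
  have hcard : #(univ.erase i) + 1 = m := by
    rw [card_erase_of_mem (mem_univ i), card_univ, Fintype.card_fin, Nat.sub_add_cancel i.pos]
  rw [sum_filter_mem_weight_div_card, sum_powerset_weight_div_card_succ,
    sum_powerset_neg_one_pow_mul_prod_div_card_succ_eq_one_add_sum_Icc, hcard]

/-- The expected average of the active clients' vectors equals the
inclusion–exclusion expression (key identity in Proposition 1). -/
theorem expected_active_average
    (m d : ℕ) (hm : 1 ≤ m) (p : Fin m → ℝ)
    (hp : ∀ i, 0 ≤ p i ∧ p i ≤ 1)
    (u : Fin m → EuclideanSpace ℝ (Fin d)) :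
    ∑ A ∈ Finset.univ.filter (fun A : Finset (Fin m) => A ≠ ∅),
      ((∏ i ∈ A, p i) * ∏ i ∈ Aᶜ, (1 - p i)) •
        ((1 / (A.card : ℝ)) • ∑ i ∈ A, u i)
    = ∑ i, (p i * (1 + ∑ j ∈ Finset.Icc 2 m,
        (-1 : ℝ) ^ (j + 1) * (1 / (j : ℝ)) *
          ∑ S ∈ (Finset.univ.erase i).powerset.filter (fun S => S.card = j - 1),
            ∏ z ∈ S, p z)) • u i :=
  expected_active_average_general m d p u
end

section
/- Let n ≥ 0 and let q : Fin n → ℝ satisfy 0 ≤ q z ≤ 1 for all z. Then Σ_{S ⊆ Fin n} (∏_{z ∈ S} q z) · (∏_{x ∉ S} (1 - q x)) · (1/(|S| + 1)) = 1 + Σ_{j=2}^{n+1} (-1)^{j+1} (1/j) Σ_{S ⊆ Fin n, |S| = j-1} ∏_{z ∈ S} q z, where the sum on the left ranges over all finite subsets S of Fin n. -/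
open Finset

lemma alt_choose_sum (m : ℕ) :
    ∑ k ∈ Finset.range (m + 1),
      (m.choose k : ℝ) * ((-1) ^ (m - k) * (1 / ((k : ℝ) + 1)))
    = (-1) ^ m * (1 / ((m : ℝ) + 1)) := by
  have hm1 : ((m : ℝ) + 1) ≠ 0 := by positivity
  have key : ∑ k ∈ Finset.range (m + 1),
      ((-1 : ℝ) ^ k * ((m + 1).choose (k + 1) : ℝ)) = 1 := by
    have h0 : (∑ i ∈ Finset.range (m + 2), (-1 : ℤ) ^ i * ((m + 1).choose i : ℤ)) = 0 := by
      rw [Int.alternating_sum_range_choose]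
      simp
    have h0' : (∑ i ∈ Finset.range (m + 2), (-1 : ℝ) ^ i * ((m + 1).choose i : ℝ)) = 0 := by
      have := congrArg (fun z : ℤ => (z : ℝ)) h0
      push_cast at this
      simpa using this
    rw [Finset.sum_range_succ'] at h0'
    simp only [pow_succ, pow_zero, Nat.choose_zero_right] at h0'
    have : -(∑ k ∈ Finset.range (m + 1), (-1 : ℝ) ^ k * ((m + 1).choose (k + 1) : ℝ)) + 1 = 0 := by
      rw [← h0']
      rw [← Finset.sum_neg_distrib]
      congr 1
      · apply Finset.sum_congr rfl
        intro k _
        ring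
      · norm_num
    linarith
  have hterm : ∀ k ∈ Finset.range (m + 1),
      (m.choose k : ℝ) * ((-1) ^ (m - k) * (1 / ((k : ℝ) + 1)))
      = ((-1) ^ m * (1 / ((m : ℝ) + 1))) * ((-1 : ℝ) ^ k * ((m + 1).choose (k + 1) : ℝ)) := by
    intro k hk
    have hkm : k ≤ m := Nat.lt_succ_iff.mp (Finset.mem_range.mp hk)
    have hchoose : ((m : ℝ) + 1) * (m.choose k : ℝ) = ((m + 1).choose (k + 1) : ℝ) * ((k : ℝ) + 1) := by
      have := congrArg (fun z : ℕ => (z : ℝ)) (Nat.add_one_mul_choose_eq m k)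
      push_cast at this
      linarith
    have hk1 : ((k : ℝ) + 1) ≠ 0 := by positivity
    have hsign : (-1 : ℝ) ^ (m - k) = (-1) ^ m * (-1) ^ k := by
      have h1 : (-1 : ℝ) ^ (m - k) * (-1) ^ k = (-1) ^ m := by
        rw [← pow_add, Nat.sub_add_cancel hkm]
      have h2 : ((-1 : ℝ) ^ k) * ((-1 : ℝ) ^ k) = 1 := by
        rw [← pow_add, ← two_mul, pow_mul]
        norm_num
      calc (-1 : ℝ) ^ (m - k) = (-1 : ℝ) ^ (m - k) * (((-1 : ℝ) ^ k) * ((-1 : ℝ) ^ k)) := by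
            rw [h2, mul_one]
        _ = (-1) ^ m * (-1) ^ k := by rw [← mul_assoc, h1]
    have hdiv : (m.choose k : ℝ) / ((k : ℝ) + 1) = ((m + 1).choose (k + 1) : ℝ) / ((m : ℝ) + 1) := by
      rw [div_eq_div_iff hk1 hm1]
      linarith
    calc (m.choose k : ℝ) * ((-1) ^ (m - k) * (1 / ((k : ℝ) + 1)))
        = (-1) ^ m * (-1) ^ k * ((m.choose k : ℝ) / ((k : ℝ) + 1)) := by rw [hsign]; ring
      _ = (-1) ^ m * (-1) ^ k * (((m + 1).choose (k + 1) : ℝ) / ((m : ℝ) + 1)) := by rw [hdiv]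
      _ = ((-1) ^ m * (1 / ((m : ℝ) + 1))) * ((-1 : ℝ) ^ k * ((m + 1).choose (k + 1) : ℝ)) := by
          ring
  rw [Finset.sum_congr rfl hterm, ← Finset.mul_sum, key, mul_one]

lemma powerset_alt_sum {α : Type*} [DecidableEq α] (U : Finset α) :
    ∑ S ∈ U.powerset, (-1 : ℝ) ^ (U.card - S.card) * (1 / ((S.card : ℝ) + 1))
    = (-1) ^ U.card * (1 / ((U.card : ℝ) + 1)) := by
  rw [Finset.sum_powerset]
  rw [← alt_choose_sum U.card]
  apply Finset.sum_congr rfl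
  intro j hj
  have hcongr : ∀ S ∈ Finset.powersetCard j U,
      (-1 : ℝ) ^ (U.card - S.card) * (1 / ((S.card : ℝ) + 1))
      = (-1 : ℝ) ^ (U.card - j) * (1 / ((j : ℝ) + 1)) := by
    intro S hS
    rw [(Finset.mem_powersetCard.mp hS).2]
  rw [Finset.sum_congr rfl hcongr, Finset.sum_const, Finset.card_powersetCard, nsmul_eq_mul]

/-- Expectation of 1/(1 + # of Bernoulli successes) as an inclusion–exclusion
expression in elementary symmetric polynomials. -/
theorem bernoulli_inverse_count_expectation
    (n : ℕ) (q : Fin n → ℝ) (hq : ∀ z, 0 ≤ q z ∧ q z ≤ 1) :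
    ∑ S : Finset (Fin n),
      (∏ z ∈ S, q z) * (∏ x ∈ Sᶜ, (1 - q x)) * (1 / ((S.card : ℝ) + 1))
    = 1 + ∑ j ∈ Finset.Icc 2 (n + 1),
        (-1 : ℝ) ^ (j + 1) * (1 / (j : ℝ)) *
          ∑ S ∈ Finset.univ.powerset.filter
              (fun S : Finset (Fin n) => S.card = j - 1),
            ∏ z ∈ S, q z := by
  classical
  set M : ℝ := ∑ U : Finset (Fin n),
      (-1 : ℝ) ^ U.card * (1 / ((U.card : ℝ) + 1)) * ∏ z ∈ U, q z with hM
  have hprod : ∀ S : Finset (Fin n), ∏ x ∈ Sᶜ, (1 - q x)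
      = ∑ T ∈ Sᶜ.powerset, (-1 : ℝ) ^ T.card * ∏ z ∈ T, q z := by
    intro S
    have := Finset.prod_add (fun x => -q x) (fun _ => (1 : ℝ)) Sᶜ
    simp only [Finset.prod_const_one, mul_one] at this
    calc ∏ x ∈ Sᶜ, (1 - q x) = ∏ x ∈ Sᶜ, (-q x + 1) := by
          apply Finset.prod_congr rfl; intro x _; ring
      _ = ∑ T ∈ Sᶜ.powerset, ∏ x ∈ T, (-q x) := this
      _ = ∑ T ∈ Sᶜ.powerset, (-1 : ℝ) ^ T.card * ∏ z ∈ T, q z := by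
          apply Finset.sum_congr rfl
          intro T _
          rw [show (fun x => -q x) = (fun x => (-1) * q x) from funext fun x => by ring]
          rw [Finset.prod_mul_distrib, Finset.prod_const]
  have lhs_eq : (∑ S : Finset (Fin n),
      (∏ z ∈ S, q z) * (∏ x ∈ Sᶜ, (1 - q x)) * (1 / ((S.card : ℝ) + 1))) = M := by
    have step1 : (∑ S : Finset (Fin n),
        (∏ z ∈ S, q z) * (∏ x ∈ Sᶜ, (1 - q x)) * (1 / ((S.card : ℝ) + 1)))
        = ∑ S : Finset (Fin n), ∑ T ∈ Sᶜ.powerset,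
            (∏ z ∈ S, q z) * ((-1 : ℝ) ^ T.card * ∏ z ∈ T, q z) * (1 / ((S.card : ℝ) + 1)) := by
      apply Finset.sum_congr rfl
      intro S _
      rw [hprod S, Finset.mul_sum, Finset.sum_mul]
    have step2 : (∑ S : Finset (Fin n), ∑ T ∈ Sᶜ.powerset,
            (∏ z ∈ S, q z) * ((-1 : ℝ) ^ T.card * ∏ z ∈ T, q z) * (1 / ((S.card : ℝ) + 1)))
        = ∑ U : Finset (Fin n), ∑ S ∈ U.powerset,
            (-1 : ℝ) ^ (U.card - S.card) * (∏ z ∈ U, q z) * (1 / ((S.card : ℝ) + 1)) := by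
      rw [Finset.sum_sigma' Finset.univ (fun S : Finset (Fin n) => Sᶜ.powerset),
          Finset.sum_sigma' Finset.univ (fun U : Finset (Fin n) => U.powerset)]
      apply Finset.sum_nbij' (fun x => ⟨x.1 ∪ x.2, x.1⟩) (fun y => ⟨y.2, y.1 \ y.2⟩)
      · rintro ⟨S, T⟩ hST
        simp only [Finset.mem_sigma, Finset.mem_univ, Finset.mem_powerset, true_and] at hST ⊢
        exact Finset.subset_union_left
      · rintro ⟨U, S⟩ hUS
        simp only [Finset.mem_sigma, Finset.mem_univ, Finset.mem_powerset, true_and] at hUS ⊢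
        intro a ha
        simp only [Finset.mem_compl]
        exact (Finset.mem_sdiff.mp ha).2
      · rintro ⟨S, T⟩ hST
        simp only [Finset.mem_sigma, Finset.mem_univ, Finset.mem_powerset, true_and] at hST
        have hdisj : Disjoint S T := Finset.disjoint_left.mpr fun a haS haT =>
          (Finset.mem_compl.mp (hST haT)) haS
        simp [Finset.union_sdiff_cancel_left hdisj]
      · rintro ⟨U, S⟩ hUS
        simp only [Finset.mem_sigma, Finset.mem_univ, Finset.mem_powerset, true_and] at hUS
        simp [Finset.union_sdiff_of_subset hUS]
      · rintro ⟨S, T⟩ hST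
        simp only [Finset.mem_sigma, Finset.mem_univ, Finset.mem_powerset, true_and] at hST
        have hdisj : Disjoint S T := Finset.disjoint_left.mpr fun a haS haT =>
          (Finset.mem_compl.mp (hST haT)) haS
        dsimp only
        rw [Finset.prod_union hdisj, Finset.card_union_of_disjoint hdisj,
          Nat.add_sub_cancel_left]
        ring
    have step3 : (∑ U : Finset (Fin n), ∑ S ∈ U.powerset,
            (-1 : ℝ) ^ (U.card - S.card) * (∏ z ∈ U, q z) * (1 / ((S.card : ℝ) + 1))) = M := by
      rw [hM]
      apply Finset.sum_congr rfl
      intro U _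
      have hfac : (∑ S ∈ U.powerset,
            (-1 : ℝ) ^ (U.card - S.card) * (∏ z ∈ U, q z) * (1 / ((S.card : ℝ) + 1)))
          = (∏ z ∈ U, q z) * ∑ S ∈ U.powerset,
            (-1 : ℝ) ^ (U.card - S.card) * (1 / ((S.card : ℝ) + 1)) := by
        rw [Finset.mul_sum]
        apply Finset.sum_congr rfl
        intro S _
        ring
      rw [hfac, powerset_alt_sum]
      ring
    rw [step1, step2, step3]
  have hMexp : M = ∑ j ∈ Finset.range (n + 1),
      (-1 : ℝ) ^ j * (1 / ((j : ℝ) + 1)) *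
        ∑ S ∈ Finset.powersetCard j (Finset.univ : Finset (Fin n)), ∏ z ∈ S, q z := by
    rw [hM, ← Finset.powerset_univ, Finset.sum_powerset]
    simp only [Finset.card_univ, Fintype.card_fin]
    apply Finset.sum_congr rfl
    intro j _
    rw [Finset.mul_sum]
    apply Finset.sum_congr rfl
    intro S hS
    rw [(Finset.mem_powersetCard.mp hS).2]
  have rhs_eq : (1 + ∑ j ∈ Finset.Icc 2 (n + 1),
        (-1 : ℝ) ^ (j + 1) * (1 / (j : ℝ)) *
          ∑ S ∈ Finset.univ.powerset.filter
              (fun S : Finset (Fin n) => S.card = j - 1),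
            ∏ z ∈ S, q z) = M := by
    have hIcc : Finset.Icc 2 (n + 1)
        = Finset.map ⟨fun k => k + 2, add_left_injective 2⟩ (Finset.range n) := by
      ext j
      simp only [Finset.mem_Icc, Finset.mem_map, Finset.mem_range, Function.Embedding.coeFn_mk]
      constructor
      · rintro ⟨h2, hn⟩
        refine ⟨j - 2, by omega, ?_⟩
        show j - 2 + 2 = j
        omega
      · rintro ⟨k, hk, rfl⟩
        show 2 ≤ k + 2 ∧ k + 2 ≤ n + 1
        omega
    rw [hIcc, Finset.sum_map, hMexp, Finset.sum_range_succ']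
    simp only [Function.Embedding.coeFn_mk]
    have h0 : ((-1 : ℝ) ^ (0 : ℕ) * (1 / (((0 : ℕ) : ℝ) + 1)) *
        ∑ S ∈ Finset.powersetCard 0 (Finset.univ : Finset (Fin n)), ∏ z ∈ S, q z) = 1 := by
      simp [Finset.powersetCard_zero]
    rw [h0, add_comm]
    congr 1
    apply Finset.sum_congr rfl
    intro k _
    have hfilter : (Finset.univ.powerset.filter
        (fun S : Finset (Fin n) => S.card = (k + 2) - 1))
        = Finset.powersetCard (k + 1) (Finset.univ : Finset (Fin n)) := by
      rw [Finset.powersetCard_eq_filter]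
      norm_num
    rw [hfilter]
    push_cast
    ring
  rw [lhs_eq, rhs_eq]
end

section
/- Let d ≥ 1, let f : EuclideanSpace ℝ (Fin d) → ℝ be differentiable, let L > 0 and suppose the gradient ∇f is Lipschitz with constant L. Let η > 0 and let (x_k)_{k ∈ ℕ} satisfy x_{k+1} = x_k - η • ∇f(x_k) for all k. Then for every natural number s ≥ 1, ‖Σ_{k=0}^{s-1} (∇f(x_k) - ∇f(x_0))‖ ≤ (((1 + ηL)^s - 1 - s·η·L)/(η·L)) · ‖∇f(x_0)‖. -/
/-!
Along gradient descent the Lipschitz bound gives `‖g (k+1) - g k‖ ≤ ηL ‖g k‖` for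
`g k = ∇f(x k)`. Hence `‖g k‖` grows at most like `(1 + ηL)^k ‖g 0‖`, the drift `‖g k - g 0‖`
is at most `((1 + ηL)^k - 1) ‖g 0‖` by telescoping, and summing this geometric bound over
`k < s` gives the constant `((1 + ηL)^s - 1 - sηL) / (ηL)`.
-/

open Finset

section RelativeIncrements

variable {E : Type*} [SeminormedAddCommGroup E] {g : ℕ → E} {a : ℝ}

theorem norm_le_one_add_pow_mul_of_norm_sub_le (ha : 0 ≤ a)
    (hg : ∀ k, ‖g (k + 1) - g k‖ ≤ a * ‖g k‖) (k : ℕ) :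
    ‖g k‖ ≤ (1 + a) ^ k * ‖g 0‖ := by
  induction k with
  | zero => simp
  | succ n ih =>
    calc ‖g (n + 1)‖ ≤ ‖g (n + 1) - g n‖ + ‖g n‖ := norm_le_norm_sub_add _ _
      _ ≤ (1 + a) * ‖g n‖ := by linarith [hg n]
      _ ≤ (1 + a) * ((1 + a) ^ n * ‖g 0‖) := by gcongr
      _ = (1 + a) ^ (n + 1) * ‖g 0‖ := by ring

theorem norm_sub_zero_le_of_norm_sub_le (ha : 0 ≤ a)
    (hg : ∀ k, ‖g (k + 1) - g k‖ ≤ a * ‖g k‖) (k : ℕ) :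
    ‖g k - g 0‖ ≤ ((1 + a) ^ k - 1) * ‖g 0‖ := by
  induction k with
  | zero => simp
  | succ n ih =>
    calc ‖g (n + 1) - g 0‖ ≤ ‖g (n + 1) - g n‖ + ‖g n - g 0‖ :=
          norm_sub_le_norm_sub_add_norm_sub _ _ _
      _ ≤ a * ((1 + a) ^ n * ‖g 0‖) + ((1 + a) ^ n - 1) * ‖g 0‖ := by
        gcongr
        exact (hg n).trans (by gcongr; exact norm_le_one_add_pow_mul_of_norm_sub_le ha hg n)
      _ = ((1 + a) ^ (n + 1) - 1) * ‖g 0‖ := by ring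

theorem sum_range_one_add_pow_sub_one {a : ℝ} (ha : a ≠ 0) (s : ℕ) :
    ∑ k ∈ range s, ((1 + a) ^ k - 1) = ((1 + a) ^ s - 1 - s * a) / a := by
  have hgeom := geom_sum_eq (x := 1 + a) (by simpa using ha) s
  rw [add_sub_cancel_left] at hgeom
  rw [sum_sub_distrib, hgeom, sum_const, card_range, nsmul_one]
  field_simp

theorem norm_sum_sub_zero_le_of_norm_sub_le (ha : 0 < a)
    (hg : ∀ k, ‖g (k + 1) - g k‖ ≤ a * ‖g k‖) (s : ℕ) :
    ‖∑ k ∈ range s, (g k - g 0)‖ ≤ ((1 + a) ^ s - 1 - s * a) / a * ‖g 0‖ :=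
  calc ‖∑ k ∈ range s, (g k - g 0)‖
      ≤ ∑ k ∈ range s, ((1 + a) ^ k - 1) * ‖g 0‖ :=
        (norm_sum_le _ _).trans <| sum_le_sum fun k _ =>
          norm_sub_zero_le_of_norm_sub_le ha.le hg k
    _ = ((1 + a) ^ s - 1 - s * a) / a * ‖g 0‖ := by
        rw [← sum_mul, sum_range_one_add_pow_sub_one ha.ne']

end RelativeIncrements

theorem norm_sub_le_of_descent_step {E : Type*} [SeminormedAddCommGroup E] [NormedSpace ℝ E]
    {G : E → E} {L η : ℝ} (hη : 0 ≤ η) (hG : ∀ x y, ‖G x - G y‖ ≤ L * ‖x - y‖)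
    {x x' : E} (hx' : x' = x - η • G x) :
    ‖G x' - G x‖ ≤ η * L * ‖G x‖ :=
  calc ‖G x' - G x‖ ≤ L * ‖x' - x‖ := hG x' x
    _ = η * L * ‖G x‖ := by
      rw [hx', sub_sub_cancel_left, norm_neg, norm_smul, Real.norm_of_nonneg hη]; ring

theorem local_steps_gradient_perturbation_general
    (d : ℕ)
    (f : EuclideanSpace ℝ (Fin d) → ℝ)
    (L : ℝ) (hL : 0 < L)
    (hlip : ∀ x y, ‖gradient f x - gradient f y‖ ≤ L * ‖x - y‖)
    (η : ℝ) (hη : 0 < η)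
    (x : ℕ → EuclideanSpace ℝ (Fin d))
    (hx : ∀ k, x (k + 1) = x k - η • gradient f (x k))
    (s : ℕ) :
    ‖∑ k ∈ Finset.range s, (gradient f (x k) - gradient f (x 0))‖ ≤
      (((1 + η * L) ^ s - 1 - (s : ℝ) * η * L) / (η * L)) *
        ‖gradient f (x 0)‖ := by
  have hstep : ∀ k, ‖gradient f (x (k + 1)) - gradient f (x k)‖ ≤
      η * L * ‖gradient f (x k)‖ := fun k =>
    norm_sub_le_of_descent_step hη.le hlip (hx k)
  simpa only [mul_assoc] using
    norm_sum_sub_zero_le_of_norm_sub_le (g := fun k => gradient f (x k)) (mul_pos hη hL) hstep s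

/-- Perturbation of multi-step local gradient descent (Lemma 1 of the paper):
the accumulated gradient drift over `s` local steps is bounded by
`(((1+ηL)^s - 1 - sηL)/(ηL)) ‖∇f(x₀)‖`. -/
theorem local_steps_gradient_perturbation
    (d : ℕ) (hd : 1 ≤ d)
    (f : EuclideanSpace ℝ (Fin d) → ℝ) (hf : Differentiable ℝ f)
    (L : ℝ) (hL : 0 < L)
    (hlip : ∀ x y, ‖gradient f x - gradient f y‖ ≤ L * ‖x - y‖)
    (η : ℝ) (hη : 0 < η)
    (x : ℕ → EuclideanSpace ℝ (Fin d))
    (hx : ∀ k, x (k + 1) = x k - η • gradient f (x k))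
    (s : ℕ) (hs : 1 ≤ s) :
    ‖∑ k ∈ Finset.range s, (gradient f (x k) - gradient f (x 0))‖ ≤
      (((1 + η * L) ^ s - 1 - (s : ℝ) * η * L) / (η * L)) *
        ‖gradient f (x 0)‖ :=
  local_steps_gradient_perturbation_general d f L hL hlip η hη x hx s
end

section
/- Let d, m ≥ 1, let L > 0, and let F_1, …, F_m : EuclideanSpace ℝ (Fin d) → ℝ be differentiable functions whose gradients ∇F_i are each Lipschitz with constant L. Let F = (1/m) Σ_{i=1}^m F_i, and suppose there exist β, ζ ≥ 0 such that for every x, (1/m) Σ_{i=1}^m ‖∇F_i(x) - ∇F(x)‖² ≤ β²‖∇F(x)‖² + ζ². Then for any points x_1, …, x_m with mean x̄ = (1/m) Σ_{i=1}^m x_i, (1/m) Σ_{i=1}^m ‖∇F_i(x_i)‖² ≤ (3L²/m) Σ_{i=1}^m ‖x_i - x̄‖² + 3(β² + 1)‖∇F(x̄)‖² + 3ζ². -/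
/-!
Split `∇F_i(x_i) = (∇F_i(x_i) - ∇F_i(x̄)) + (∇F_i(x̄) - ∇F(x̄)) + ∇F(x̄)` and use
`‖a + b + c‖² ≤ 3(‖a‖² + ‖b‖² + ‖c‖²)`: the first piece is controlled by the Lipschitz
bound, the average of the second by the dissimilarity condition at `x̄`.
-/

open Finset

lemma sq_norm_add_add_le {E : Type*} [SeminormedAddCommGroup E] (a b c : E) :
    ‖a + b + c‖ ^ 2 ≤ 3 * ‖a‖ ^ 2 + 3 * ‖b‖ ^ 2 + 3 * ‖c‖ ^ 2 := by
  have htri : ‖a + b + c‖ ≤ ‖a‖ + ‖b‖ + ‖c‖ := norm_add₃_le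
  have hsq : ‖a + b + c‖ ^ 2 ≤ (‖a‖ + ‖b‖ + ‖c‖) ^ 2 := by gcongr
  nlinarith [sq_nonneg (‖a‖ - ‖b‖), sq_nonneg (‖b‖ - ‖c‖), sq_nonneg (‖a‖ - ‖c‖)]

lemma sq_norm_le_sq_norm_sub_add_sq_norm_sub_add_sq_norm {E : Type*} [SeminormedAddCommGroup E]
    (u v w : E) : ‖u‖ ^ 2 ≤ 3 * ‖u - v‖ ^ 2 + 3 * ‖v - w‖ ^ 2 + 3 * ‖w‖ ^ 2 := by
  simpa using sq_norm_add_add_le (u - v) (v - w) w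

theorem average_local_gradient_bound_general
    (d m : ℕ) (hm : 1 ≤ m)
    (L : ℝ)
    (F : Fin m → EuclideanSpace ℝ (Fin d) → ℝ)
    (hlip : ∀ i x y, ‖gradient (F i) x - gradient (F i) y‖ ≤ L * ‖x - y‖)
    (Fbar : EuclideanSpace ℝ (Fin d) → ℝ)
    (β ζ : ℝ)
    (hdissim : ∀ x, (1 / (m : ℝ)) *
        ∑ i, ‖gradient (F i) x - gradient Fbar x‖ ^ 2 ≤
      β ^ 2 * ‖gradient Fbar x‖ ^ 2 + ζ ^ 2)
    (x : Fin m → EuclideanSpace ℝ (Fin d))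
    (xbar : EuclideanSpace ℝ (Fin d)) :
    (1 / (m : ℝ)) * ∑ i, ‖gradient (F i) (x i)‖ ^ 2 ≤
      (3 * L ^ 2 / (m : ℝ)) * ∑ i, ‖x i - xbar‖ ^ 2
        + 3 * (β ^ 2 + 1) * ‖gradient Fbar xbar‖ ^ 2 + 3 * ζ ^ 2 := by
  set g := gradient Fbar xbar
  have hclient : ∀ i, ‖gradient (F i) (x i)‖ ^ 2 ≤
      3 * L ^ 2 * ‖x i - xbar‖ ^ 2 + 3 * ‖gradient (F i) xbar - g‖ ^ 2 + 3 * ‖g‖ ^ 2 := by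
    intro i
    have hlip_sq : ‖gradient (F i) (x i) - gradient (F i) xbar‖ ^ 2 ≤ L ^ 2 * ‖x i - xbar‖ ^ 2 := by
      rw [← mul_pow]; exact pow_le_pow_left₀ (norm_nonneg _) (hlip i (x i) xbar) 2
    linarith [sq_norm_le_sq_norm_sub_add_sq_norm_sub_add_sq_norm
      (gradient (F i) (x i)) (gradient (F i) xbar) g]
  have hm₀ : (m : ℝ) ≠ 0 := by positivity
  calc (1 / (m : ℝ)) * ∑ i, ‖gradient (F i) (x i)‖ ^ 2
      ≤ (1 / (m : ℝ)) * ∑ i, (3 * L ^ 2 * ‖x i - xbar‖ ^ 2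
          + 3 * ‖gradient (F i) xbar - g‖ ^ 2 + 3 * ‖g‖ ^ 2) := by
        gcongr with i; exact hclient i
    _ = (3 * L ^ 2 / (m : ℝ)) * ∑ i, ‖x i - xbar‖ ^ 2
          + 3 * ((1 / (m : ℝ)) * ∑ i, ‖gradient (F i) xbar - g‖ ^ 2) + 3 * ‖g‖ ^ 2 := by
        simp only [sum_add_distrib, ← mul_sum, sum_const, card_univ, Fintype.card_fin,
          nsmul_eq_mul]
        field_simp
    _ ≤ (3 * L ^ 2 / (m : ℝ)) * ∑ i, ‖x i - xbar‖ ^ 2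
          + 3 * (β ^ 2 * ‖g‖ ^ 2 + ζ ^ 2) + 3 * ‖g‖ ^ 2 := by
        gcongr; exact hdissim xbar
    _ = (3 * L ^ 2 / (m : ℝ)) * ∑ i, ‖x i - xbar‖ ^ 2
          + 3 * (β ^ 2 + 1) * ‖g‖ ^ 2 + 3 * ζ ^ 2 := by ring

/-- Proposition 3 of the paper: bounding the average squared local gradient
norm by the consensus error, the global gradient at the average point, and the
inter-client heterogeneity constants. -/
theorem average_local_gradient_bound
    (d m : ℕ) (hd : 1 ≤ d) (hm : 1 ≤ m)
    (L : ℝ) (hL : 0 < L)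
    (F : Fin m → EuclideanSpace ℝ (Fin d) → ℝ)
    (hdiff : ∀ i, Differentiable ℝ (F i))
    (hlip : ∀ i x y, ‖gradient (F i) x - gradient (F i) y‖ ≤ L * ‖x - y‖)
    (Fbar : EuclideanSpace ℝ (Fin d) → ℝ)
    (hFbar : ∀ y, Fbar y = (1 / (m : ℝ)) * ∑ i, F i y)
    (β ζ : ℝ) (hβ : 0 ≤ β) (hζ : 0 ≤ ζ)
    (hdissim : ∀ x, (1 / (m : ℝ)) *
        ∑ i, ‖gradient (F i) x - gradient Fbar x‖ ^ 2 ≤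
      β ^ 2 * ‖gradient Fbar x‖ ^ 2 + ζ ^ 2)
    (x : Fin m → EuclideanSpace ℝ (Fin d))
    (xbar : EuclideanSpace ℝ (Fin d))
    (hxbar : xbar = (1 / (m : ℝ)) • ∑ i, x i) :
    (1 / (m : ℝ)) * ∑ i, ‖gradient (F i) (x i)‖ ^ 2 ≤
      (3 * L ^ 2 / (m : ℝ)) * ∑ i, ‖x i - xbar‖ ^ 2
        + 3 * (β ^ 2 + 1) * ‖gradient Fbar xbar‖ ^ 2 + 3 * ζ ^ 2 :=
  average_local_gradient_bound_general d m hm L F hlip Fbar β ζ hdissim x xbar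
end

section
/- Let d, m ≥ 1, let L > 0, and let F_1, …, F_m : EuclideanSpace ℝ (Fin d) → ℝ be differentiable functions whose gradients ∇F_i are each Lipschitz with constant L. Let F = (1/m) Σ_{i=1}^m F_i. Then for any points x_1, …, x_m with mean x̄ = (1/m) Σ_{i=1}^m x_i, writing h = (1/m) Σ_{i=1}^m ∇F_i(x_i), one has -⟪∇F(x̄), h⟫ ≤ -(1/2)‖∇F(x̄)‖² - (1/2)‖h‖² + (L²/(2m)) Σ_{i=1}^m ‖x̄ - x_i‖². -/
/-!
Polarization writes `-⟪g, h⟫` as `-‖g‖²/2 - ‖h‖²/2 + ‖g - h‖²/2`. Here `g - h` is the average of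
`∇Fᵢ(x̄) - ∇Fᵢ(xᵢ)`, so by Cauchy–Schwarz `‖g - h‖²` is at most the average of the squared norms,
and each of those is at most `L²‖x̄ - xᵢ‖²`.
-/

open scoped RealInnerProductSpace

theorem gradient_const_mul_sum {E ι : Type*} [NormedAddCommGroup E] [InnerProductSpace ℝ E]
    [CompleteSpace E] (s : Finset ι) (c : ℝ) {F : ι → E → ℝ} {x : E}
    (hF : ∀ i ∈ s, DifferentiableAt ℝ (F i) x) :
    gradient (fun y => c * ∑ i ∈ s, F i y) x = c • ∑ i ∈ s, gradient (F i) x := by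
  refine HasGradientAt.gradient ?_
  rw [hasGradientAt_iff_hasFDerivAt]
  simp only [map_smul, map_sum, toDual_gradient]
  exact (HasFDerivAt.fun_sum fun i hi => (hF i hi).hasFDerivAt).const_mul c

theorem norm_sq_average_le {E ι : Type*} [SeminormedAddCommGroup E] [NormedSpace ℝ E]
    (s : Finset ι) (v : ι → E) :
    ‖(1 / (s.card : ℝ)) • ∑ i ∈ s, v i‖ ^ 2 ≤ (1 / (s.card : ℝ)) * ∑ i ∈ s, ‖v i‖ ^ 2 := by
  rcases s.eq_empty_or_nonempty with rfl | hs
  · simp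
  have hcard : (0 : ℝ) < s.card := by exact_mod_cast hs.card_pos
  calc ‖(1 / (s.card : ℝ)) • ∑ i ∈ s, v i‖ ^ 2
      ≤ (1 / (s.card : ℝ)) ^ 2 * (∑ i ∈ s, ‖v i‖) ^ 2 := by
        rw [norm_smul, mul_pow, Real.norm_of_nonneg (by positivity)]
        gcongr
        exact norm_sum_le _ _
    _ ≤ (1 / (s.card : ℝ)) ^ 2 * (s.card * ∑ i ∈ s, ‖v i‖ ^ 2) := by
        gcongr
        exact sq_sum_le_card_mul_sum_sq
    _ = (1 / (s.card : ℝ)) * ∑ i ∈ s, ‖v i‖ ^ 2 := by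
        field_simp

theorem descent_inner_product_bound_general
    (d m : ℕ)
    (L : ℝ)
    (F : Fin m → EuclideanSpace ℝ (Fin d) → ℝ)
    (hdiff : ∀ i, Differentiable ℝ (F i))
    (hlip : ∀ i x y, ‖gradient (F i) x - gradient (F i) y‖ ≤ L * ‖x - y‖)
    (Fbar : EuclideanSpace ℝ (Fin d) → ℝ)
    (hFbar : ∀ y, Fbar y = (1 / (m : ℝ)) * ∑ i, F i y)
    (x : Fin m → EuclideanSpace ℝ (Fin d))
    (xbar : EuclideanSpace ℝ (Fin d))
    (h : EuclideanSpace ℝ (Fin d))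
    (hh : h = (1 / (m : ℝ)) • ∑ i, gradient (F i) (x i)) :
    -⟪gradient Fbar xbar, h⟫ ≤
      -(1 / 2) * ‖gradient Fbar xbar‖ ^ 2 - (1 / 2) * ‖h‖ ^ 2
        + (L ^ 2 / (2 * (m : ℝ))) * ∑ i, ‖xbar - x i‖ ^ 2 := by
  have hgrad : gradient Fbar xbar = (1 / (m : ℝ)) • ∑ i, gradient (F i) xbar := by
    rw [funext hFbar]
    exact gradient_const_mul_sum _ _ fun i _ => (hdiff i).differentiableAt
  have hgap : ‖gradient Fbar xbar - h‖ ^ 2 ≤ (1 / (m : ℝ)) * (L ^ 2 * ∑ i, ‖xbar - x i‖ ^ 2) := by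
    calc ‖gradient Fbar xbar - h‖ ^ 2
        = ‖(1 / (m : ℝ)) • ∑ i, (gradient (F i) xbar - gradient (F i) (x i))‖ ^ 2 := by
          rw [hgrad, hh, ← smul_sub, Finset.sum_sub_distrib]
      _ ≤ (1 / (m : ℝ)) * ∑ i, ‖gradient (F i) xbar - gradient (F i) (x i)‖ ^ 2 := by
          simpa using norm_sq_average_le Finset.univ
            fun i => gradient (F i) xbar - gradient (F i) (x i)
      _ ≤ (1 / (m : ℝ)) * (L ^ 2 * ∑ i, ‖xbar - x i‖ ^ 2) := by
          gcongr _ * ?_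
          rw [Finset.mul_sum]
          gcongr with i
          rw [← mul_pow]
          exact pow_le_pow_left₀ (norm_nonneg _) (hlip i xbar (x i)) 2
  have hpolar := norm_sub_sq_real (gradient Fbar xbar) h
  have hconst : L ^ 2 / (2 * (m : ℝ)) * ∑ i, ‖xbar - x i‖ ^ 2
      = 1 / 2 * ((1 / (m : ℝ)) * (L ^ 2 * ∑ i, ‖xbar - x i‖ ^ 2)) := by ring
  linarith

/-- The inner-product bound from the descent lemma (term (A)):
`-⟪∇F(x̄), h⟫ ≤ -(1/2)‖∇F(x̄)‖² - (1/2)‖h‖² + (L²/(2m)) Σ‖x̄ - xᵢ‖²`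
where `h = (1/m) Σ ∇Fᵢ(xᵢ)`. -/
theorem descent_inner_product_bound
    (d m : ℕ) (hd : 1 ≤ d) (hm : 1 ≤ m)
    (L : ℝ) (hL : 0 < L)
    (F : Fin m → EuclideanSpace ℝ (Fin d) → ℝ)
    (hdiff : ∀ i, Differentiable ℝ (F i))
    (hlip : ∀ i x y, ‖gradient (F i) x - gradient (F i) y‖ ≤ L * ‖x - y‖)
    (Fbar : EuclideanSpace ℝ (Fin d) → ℝ)
    (hFbar : ∀ y, Fbar y = (1 / (m : ℝ)) * ∑ i, F i y)
    (x : Fin m → EuclideanSpace ℝ (Fin d))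
    (xbar : EuclideanSpace ℝ (Fin d))
    (hxbar : xbar = (1 / (m : ℝ)) • ∑ i, x i)
    (h : EuclideanSpace ℝ (Fin d))
    (hh : h = (1 / (m : ℝ)) • ∑ i, gradient (F i) (x i)) :
    -⟪gradient Fbar xbar, h⟫ ≤
      -(1 / 2) * ‖gradient Fbar xbar‖ ^ 2 - (1 / 2) * ‖h‖ ^ 2
        + (L ^ 2 / (2 * (m : ℝ))) * ∑ i, ‖xbar - x i‖ ^ 2 :=
  descent_inner_product_bound_general d m L F hdiff hlip Fbar hFbar x xbar h hh
end

section
/- Let d, m ≥ 1, let η ∈ ℝ, let J ∈ Matrix (Fin m) (Fin m) ℝ be the matrix with every entry equal to 1/m, and let I be the identity matrix. Suppose W⁽⁰⁾, …, W⁽ᵗ⁻¹⁾ ∈ Matrix (Fin m) (Fin m) ℝ satisfy W⁽ʳ⁾ * J = J and J * W⁽ʳ⁾ = J for every r < t, let G⁽⁰⁾, …, G⁽ᵗ⁻¹⁾ ∈ Matrix (Fin d) (Fin m) ℝ be arbitrary, let X⁽⁰⁾ ∈ Matrix (Fin d) (Fin m) ℝ satisfy X⁽⁰⁾ * J = X⁽⁰⁾,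 and define X⁽ʳ⁺¹⁾ = (X⁽ʳ⁾ - η • G⁽ʳ⁾) * W⁽ʳ⁾ for 0 ≤ r < t. Then X⁽ᵗ⁾ * (I - J) = -η • Σ_{q=0}^{t-1} G⁽q⁾ * (W⁽q⁾ * W⁽q+1⁾ * ⋯ * W⁽ᵗ⁻¹⁾ - J). -/
/-- The consensus-error expansion (Eq. (6) of the paper): after `t` rounds of
`X⁽ʳ⁺¹⁾ = (X⁽ʳ⁾ - ηG⁽ʳ⁾)W⁽ʳ⁾`, starting from equal columns, the deviation from
the average is `-η Σ_q G⁽q⁾ (W⁽q⁾ ⋯ W⁽ᵗ⁻¹⁾ - J)`. -/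
theorem consensus_error_expansion
    (d m : ℕ) (hd : 1 ≤ d) (hm : 1 ≤ m) (η : ℝ) (t : ℕ)
    (J : Matrix (Fin m) (Fin m) ℝ)
    (hJ : ∀ i j, J i j = 1 / (m : ℝ))
    (W : ℕ → Matrix (Fin m) (Fin m) ℝ)
    (hWJ : ∀ r < t, W r * J = J) (hJW : ∀ r < t, J * W r = J)
    (G : ℕ → Matrix (Fin d) (Fin m) ℝ)
    (X : ℕ → Matrix (Fin d) (Fin m) ℝ)
    (hX0 : X 0 * J = X 0)
    (hXrec : ∀ r < t, X (r + 1) = (X r - η • G r) * W r) :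
    X t * (1 - J) =
      -η • ∑ q ∈ Finset.range t,
        G q * (((List.Ico q t).map W).prod - J) := by
  induction t with
  | zero =>
    simp [Matrix.mul_sub, hX0]
  | succ t ih =>
    have ht : t < t + 1 := Nat.lt_succ_self t
    have h1 : W t * J = J := hWJ t ht
    have h2 : J * W t = J := hJW t ht
    have IH := ih (fun r hr => hWJ r (hr.trans ht)) (fun r hr => hJW r (hr.trans ht))
      (fun r hr => hXrec r (hr.trans ht))
    rw [hXrec t ht]
    have key : (X t - η • G t) * W t * (1 - J)
        = (X t * (1 - J)) * W t - η • (G t * (W t - J)) := by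
      simp only [Matrix.sub_mul, Matrix.mul_sub, Matrix.mul_one, Matrix.one_mul,
        Matrix.smul_mul, smul_sub, Matrix.mul_assoc, h1, h2]
      abel
    have hsum : (∑ q ∈ Finset.range t, G q * (((List.Ico q t).map W).prod - J)) * W t
        = ∑ q ∈ Finset.range t, G q * (((List.Ico q (t + 1)).map W).prod - J) := by
      rw [Matrix.sum_mul]
      refine Finset.sum_congr rfl ?_
      intro q hq
      rw [List.Ico.succ_top (Nat.le_of_lt (Finset.mem_range.mp hq)), List.map_append,
        List.prod_append, List.map_singleton, List.prod_singleton,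
        Matrix.mul_assoc, Matrix.sub_mul, h2]
    rw [key, IH, Matrix.smul_mul, hsum, Finset.sum_range_succ, List.Ico.succ_singleton]
    simp [smul_add, List.map_singleton, sub_eq_add_neg]
end

section
/- Let m ≥ 1, let c ∈ (0,1], and let p : Fin m → ℝ satisfy c ≤ p i ≤ 1 for all i. Define M = Σ_{A ⊆ Fin m} w_p(A) • (W(A) * W(A)), the sum ranging over all finite subsets A of Fin m. Then every entry of M satisfies M_{j j'} ≥ c² · (1 - (1 - c)^m) / m. -/
open Finset

/-- Entrywise lower bound on `M = E[W²]` (first part of Lemma 3):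
every entry of `M` is at least `c²(1 - (1-c)^m)/m`. -/
theorem expected_gossip_square_entry_lower_bound
    (m : ℕ) (hm : 1 ≤ m) (c : ℝ) (hc0 : 0 < c) (hc1 : c ≤ 1)
    (p : Fin m → ℝ) (hp : ∀ i, c ≤ p i ∧ p i ≤ 1)
    (W : Finset (Fin m) → Matrix (Fin m) (Fin m) ℝ)
    (hW : ∀ A i j, W A i j =
      if i ∈ A ∧ j ∈ A then 1 / (A.card : ℝ)
      else if i = j then 1 else 0)
    (M : Matrix (Fin m) (Fin m) ℝ)
    (hM : M = ∑ A : Finset (Fin m),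
      ((∏ i ∈ A, p i) * ∏ i ∈ Aᶜ, (1 - p i)) • (W A * W A)) :
    ∀ j j', c ^ 2 * (1 - (1 - c) ^ m) / (m : ℝ) ≤ M j j' := by
  intro j j'
  have hmpos : (0:ℝ) < m := by exact_mod_cast hm
  have hWnn : ∀ A i k, 0 ≤ W A i k := by
    intro A i k
    rw [hW]
    split_ifs <;> positivity
  have hpnn : ∀ i, 0 ≤ p i := fun i => le_trans hc0.le (hp i).1
  have hwnn : ∀ A : Finset (Fin m), 0 ≤ (∏ i ∈ A, p i) * ∏ i ∈ Aᶜ, (1 - p i) := by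
    intro A
    apply mul_nonneg
    · exact Finset.prod_nonneg fun i _ => hpnn i
    · exact Finset.prod_nonneg fun i _ => by linarith [(hp i).2]
  set g : Fin m → ℝ := fun i => if i = j ∨ i = j' then 0 else 1 - p i with hg
  -- quadratic form entry lower bound when j, j' ∈ A
  have hWsq : ∀ A : Finset (Fin m), j ∈ A → j' ∈ A →
      1 / (m:ℝ) ≤ (W A * W A) j j' := by
    intro A hj hj'
    have hcardpos : 0 < (A.card : ℝ) := by
      exact_mod_cast Finset.card_pos.mpr ⟨j, hj⟩
    have hcardle : (A.card : ℝ) ≤ m := by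
      have h1 : A.card ≤ m := by simpa using Finset.card_le_univ A
      exact_mod_cast h1
    rw [Matrix.mul_apply]
    have step1 : ∑ k ∈ A, W A j k * W A k j' ≤ ∑ k, W A j k * W A k j' :=
      Finset.sum_le_sum_of_subset_of_nonneg (Finset.subset_univ A)
        (fun k _ _ => mul_nonneg (hWnn A j k) (hWnn A k j'))
    have step2 : ∑ k ∈ A, W A j k * W A k j'
        = A.card * (1 / (A.card:ℝ) * (1 / (A.card:ℝ))) := by
      rw [Finset.sum_congr rfl (fun k hk => by
        rw [hW A j k, hW A k j', if_pos ⟨hj, hk⟩, if_pos ⟨hk, hj'⟩])]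
      rw [Finset.sum_const, nsmul_eq_mul]
    have step3 : (1:ℝ) / m ≤ A.card * (1 / (A.card:ℝ) * (1 / (A.card:ℝ))) := by
      have heq : (A.card:ℝ) * (1 / (A.card:ℝ) * (1 / (A.card:ℝ))) = 1 / A.card := by
        field_simp
      rw [heq]
      exact one_div_le_one_div_of_le hcardpos hcardle
    linarith [step1, step2 ▸ step3]
  -- termwise bound
  have key : ∀ A : Finset (Fin m),
      ((∏ i ∈ A, p i) * ∏ i ∈ Aᶜ, g i) * (1 / m) ≤
      ((∏ i ∈ A, p i) * ∏ i ∈ Aᶜ, (1 - p i)) * (W A * W A) j j' := by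
    intro A
    by_cases h : j ∈ A ∧ j' ∈ A
    · have hgeq : ∏ i ∈ Aᶜ, g i = ∏ i ∈ Aᶜ, (1 - p i) := by
        refine Finset.prod_congr rfl fun i hi => ?_
        have hiA : i ∉ A := by simpa using hi
        have hne : ¬ (i = j ∨ i = j') := by
          rintro (rfl | rfl) <;> exact hiA (by tauto)
        simp [hg, hne]
      rw [hgeq]
      exact mul_le_mul_of_nonneg_left (hWsq A h.1 h.2) (hwnn A)
    · have hzero : ∏ i ∈ Aᶜ, g i = 0 := by
        rcases not_and_or.mp h with hj | hj'
        · exact Finset.prod_eq_zero (by simpa using hj : j ∈ Aᶜ) (by simp [hg])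
        · exact Finset.prod_eq_zero (by simpa using hj' : j' ∈ Aᶜ) (by simp [hg])
      rw [hzero, mul_zero, zero_mul]
      have hq : 0 ≤ (W A * W A) j j' := by
        rw [Matrix.mul_apply]
        exact Finset.sum_nonneg fun k _ => mul_nonneg (hWnn A j k) (hWnn A k j')
      exact mul_nonneg (hwnn A) hq
  -- the sum over all subsets with g equals a product
  have hprodsum : ∑ A : Finset (Fin m), (∏ i ∈ A, p i) * ∏ i ∈ Aᶜ, g i
      = ∏ i, (p i + g i) := by
    rw [Finset.prod_add, Finset.powerset_univ]
    refine Finset.sum_congr rfl fun A _ => ?_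
    rw [Finset.compl_eq_univ_sdiff]
  -- lower bound on the product
  have hprodge : c ^ 2 ≤ ∏ i, (p i + g i) := by
    have hle : ∀ i ∈ (Finset.univ : Finset (Fin m)),
        (if i = j ∨ i = j' then c else 1) ≤ p i + g i := by
      intro i _
      by_cases hi : i = j ∨ i = j'
      · simp only [hg, if_pos hi]
        linarith [(hp i).1]
      · simp only [hg, if_neg hi]
        linarith
    have hnn : ∀ i ∈ (Finset.univ : Finset (Fin m)),
        (0:ℝ) ≤ (if i = j ∨ i = j' then c else 1) := by
      intro i _; split_ifs <;> [exact hc0.le; norm_num]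
    have h1 : ∏ i, (if i = j ∨ i = j' then c else 1) ≤ ∏ i, (p i + g i) :=
      Finset.prod_le_prod hnn hle
    have h2 : ∏ i, (if i = j ∨ i = j' then c else 1)
        = c ^ (Finset.univ.filter (fun i => i = j ∨ i = j')).card := by
      rw [Finset.prod_ite, Finset.prod_const, Finset.prod_const, one_pow, mul_one]
    have h3 : (Finset.univ.filter (fun i => i = j ∨ i = j')).card ≤ 2 := by
      have hsub : Finset.univ.filter (fun i => i = j ∨ i = j') ⊆ {j, j'} := by
        intro i hi
        simp only [Finset.mem_filter] at hi
        simp [hi.2]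
      calc (Finset.univ.filter (fun i => i = j ∨ i = j')).card
          ≤ ({j, j'} : Finset (Fin m)).card := Finset.card_le_card hsub
        _ ≤ 2 := Finset.card_insert_le j {j'} |>.trans (by simp)
    have h4 : c ^ 2 ≤ c ^ (Finset.univ.filter (fun i => i = j ∨ i = j')).card :=
      pow_le_pow_of_le_one hc0.le hc1 h3
    linarith [h1, h2 ▸ h4]
  -- assemble
  have hMjj : M j j' = ∑ A : Finset (Fin m),
      ((∏ i ∈ A, p i) * ∏ i ∈ Aᶜ, (1 - p i)) * (W A * W A) j j' := by
    rw [hM]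
    simp [Matrix.sum_apply]
  have hsum : (∏ i, (p i + g i)) * (1 / m) ≤ M j j' := by
    rw [hMjj, ← hprodsum, Finset.sum_mul]
    exact Finset.sum_le_sum fun A _ => key A
  have hfin : c ^ 2 * (1 - (1 - c) ^ m) / m ≤ (∏ i, (p i + g i)) * (1 / m) := by
    have hx : (0:ℝ) ≤ (1 - c) ^ m := pow_nonneg (by linarith) m
    have h5 : c ^ 2 * (1 - (1 - c) ^ m) ≤ ∏ i, (p i + g i) := by
      nlinarith [sq_nonneg c]
    calc c ^ 2 * (1 - (1 - c) ^ m) / m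
        ≤ (∏ i, (p i + g i)) / m := by
          apply div_le_div_of_nonneg_right h5 hmpos.le |>.trans_eq rfl
      _ = (∏ i, (p i + g i)) * (1 / m) := by ring
  linarith [hsum, hfin]
end

section
/- Let m ≥ 1, let δ > 0, and let M ∈ Matrix (Fin m) (Fin m) ℝ be symmetric (Mᵀ = M) with every row sum equal to 1 and every entry M_{ij} ≥ δ. Then for every v : Fin m → ℝ with Σ_i v i = 0, the quadratic form satisfies Σ_{i,j} v i · M_{ij} · v j ≤ (1 - m²·δ²/8) · Σ_i (v i)². -/
open Matrix

/-- Spectral gap from an entrywise lower bound (Cheeger-type bound): a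
symmetric doubly stochastic matrix with entries at least `δ` has quadratic
form at most `1 - m²δ²/8` on mean-zero vectors. -/
theorem quadratic_form_spectral_gap
    (m : ℕ) (hm : 1 ≤ m) (δ : ℝ) (hδ : 0 < δ)
    (M : Matrix (Fin m) (Fin m) ℝ)
    (hsymm : Mᵀ = M)
    (hrow : ∀ i, ∑ j, M i j = 1)
    (hpos : ∀ i j, δ ≤ M i j)
    (v : Fin m → ℝ) (hv : ∑ i, v i = 0) :
    ∑ i, ∑ j, v i * M i j * v j ≤
      (1 - (m : ℝ) ^ 2 * δ ^ 2 / 8) * ∑ i, v i ^ 2 := by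
  have i0 : Fin m := ⟨0, hm⟩
  have hmδ : (m : ℝ) * δ ≤ 1 := by
    calc (m : ℝ) * δ = ∑ _j : Fin m, δ := by simp [mul_comm]
    _ ≤ ∑ j, M i0 j := Finset.sum_le_sum fun j _ => hpos i0 j
    _ = 1 := hrow i0
  have hsym' : ∀ i j, M i j = M j i := fun i j => by
    have := congrFun (congrFun hsymm i) j
    simpa [Matrix.transpose_apply] using this.symm
  have hcol : ∀ j, ∑ i, M i j = 1 := fun j => by
    simp_rw [fun i => hsym' i j]; exact hrow j
  have hrowN : ∀ i, ∑ j, (M i j - δ) = 1 - (m : ℝ) * δ := fun i => by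
    rw [Finset.sum_sub_distrib, hrow]; simp [mul_comm]
  have hcolN : ∀ j, ∑ i, (M i j - δ) = 1 - (m : ℝ) * δ := fun j => by
    rw [Finset.sum_sub_distrib, hcol]; simp [mul_comm]
  have hS : 0 ≤ ∑ i, v i ^ 2 := Finset.sum_nonneg fun i _ => sq_nonneg _
  have key : ∀ i, ∑ j, v i * M i j * v j = ∑ j, v i * (M i j - δ) * v j := by
    intro i
    have h : ∑ j, v i * (M i j - δ) * v j
        = (∑ j, v i * M i j * v j) - v i * δ * ∑ j, v j := by
      rw [Finset.mul_sum, ← Finset.sum_sub_distrib]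
      exact Finset.sum_congr rfl fun j _ => by ring
    rw [h, hv]; ring
  have hbound : ∀ i j, v i * (M i j - δ) * v j
      ≤ (M i j - δ) * ((v i ^ 2 + v j ^ 2) / 2) := by
    intro i j
    have hN : 0 ≤ M i j - δ := sub_nonneg.2 (hpos i j)
    have h2 : v i * v j ≤ (v i ^ 2 + v j ^ 2) / 2 := by
      nlinarith [sq_nonneg (v i - v j)]
    calc v i * (M i j - δ) * v j = (M i j - δ) * (v i * v j) := by ring
    _ ≤ _ := mul_le_mul_of_nonneg_left h2 hN
  have hsum : ∑ i, ∑ j, (M i j - δ) * ((v i ^ 2 + v j ^ 2) / 2)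
      = (1 - (m : ℝ) * δ) * ∑ i, v i ^ 2 := by
    have split : ∀ i j : Fin m, (M i j - δ) * ((v i ^ 2 + v j ^ 2) / 2)
        = (M i j - δ) * v i ^ 2 / 2 + (M i j - δ) * v j ^ 2 / 2 :=
      fun i j => by ring
    simp_rw [split, Finset.sum_add_distrib]
    have hA : ∑ i, ∑ j, (M i j - δ) * v i ^ 2 / 2
        = (1 - (m : ℝ) * δ) / 2 * ∑ i, v i ^ 2 := by
      rw [Finset.mul_sum]
      refine Finset.sum_congr rfl fun i _ => ?_
      rw [← Finset.sum_div, ← Finset.sum_mul, hrowN i]; ring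
    have hB : ∑ i, ∑ j, (M i j - δ) * v j ^ 2 / 2
        = (1 - (m : ℝ) * δ) / 2 * ∑ i, v i ^ 2 := by
      rw [Finset.sum_comm, Finset.mul_sum]
      refine Finset.sum_congr rfl fun j _ => ?_
      rw [← Finset.sum_div, ← Finset.sum_mul, hcolN j]; ring
    rw [hA, hB]; ring
  have hmδ0 : 0 ≤ (m : ℝ) * δ := by positivity
  calc ∑ i, ∑ j, v i * M i j * v j
      = ∑ i, ∑ j, v i * (M i j - δ) * v j :=
        Finset.sum_congr rfl fun i _ => key i
    _ ≤ ∑ i, ∑ j, (M i j - δ) * ((v i ^ 2 + v j ^ 2) / 2) :=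
        Finset.sum_le_sum fun i _ => Finset.sum_le_sum fun j _ => hbound i j
    _ = (1 - (m : ℝ) * δ) * ∑ i, v i ^ 2 := hsum
    _ ≤ (1 - (m : ℝ) ^ 2 * δ ^ 2 / 8) * ∑ i, v i ^ 2 := by
        apply mul_le_mul_of_nonneg_right _ hS
        nlinarith [hmδ, hmδ0]
end

section
/- Let m ≥ 1, let c ∈ (0,1], and let p : Fin m → ℝ satisfy c ≤ p i ≤ 1 for all i. Define M = Σ_{A ⊆ Fin m} w_p(A) • (W(A) * W(A)), the sum ranging over all finite subsets A of Fin m. Then for every v : Fin m → ℝ with Σ_i v i = 0, the quadratic form satisfies Σ_{i,j} v i · M_{ij} · v j ≤ (1 - c⁴·(1 - (1 - c)^m)²/8) · Σ_i (v i)². -/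
/-!
`W(A)` is the orthogonal projection averaging the coordinates in `A`, so `W(A)² = W(A)` and
`⟨v, W(A) v⟩ = ‖v‖² - (1 / (2|A|)) ∑_{i,j ∈ A} (v i - v j)²`. Averaging over `A`, with `|A| ≤ m`
and `P(i, j ∈ A) = p i * p j ≥ c²` for `i ≠ j`, the expected loss is at least
`(c² / (2m)) ∑_{i,j} (v i - v j)²`, which equals `c² ‖v‖²` when `∑ v = 0`. Hence
`⟨v, M v⟩ ≤ (1 - c²) ‖v‖²`, and `c⁴ (1 - (1 - c)^m)² / 8 ≤ c²` for `0 < c ≤ 1`.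
-/

open Finset Matrix

namespace Finset

variable {ι R : Type*}

theorem sum_sum_sub_sq [CommRing R] (s : Finset ι) (f : ι → R) :
    ∑ i ∈ s, ∑ j ∈ s, (f i - f j) ^ 2 = 2 * (#s * ∑ i ∈ s, f i ^ 2 - (∑ i ∈ s, f i) ^ 2) := by
  simp only [sub_sq, sum_add_distrib, sum_sub_distrib, sum_const, nsmul_eq_mul, ← mul_sum,
    ← sum_mul]
  ring

theorem sum_sq_sub_sq_sum_div_card [Field R] [CharZero R] (s : Finset ι) (f : ι → R) :
    ∑ i ∈ s, f i ^ 2 - (∑ i ∈ s, f i) ^ 2 / #s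
      = (∑ i ∈ s, ∑ j ∈ s, (f i - f j) ^ 2) / (2 * #s) := by
  rcases s.eq_empty_or_nonempty with rfl | hs
  · simp
  · have : (#s : R) ≠ 0 := Nat.cast_ne_zero.2 hs.card_pos.ne'
    rw [sum_sum_sub_sq]
    field_simp

end Finset

section

variable {ι : Type*} [Fintype ι] [DecidableEq ι]

noncomputable def gossipMatrix (A : Finset ι) : Matrix ι ι ℝ := fun i j =>
  if i ∈ A ∧ j ∈ A then 1 / (#A : ℝ) else if i = j then 1 else 0

theorem gossipMatrix_mulVec_apply (A : Finset ι) (v : ι → ℝ) (i : ι) :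
    (gossipMatrix A *ᵥ v) i = if i ∈ A then (∑ j ∈ A, v j) / #A else v i := by
  by_cases hi : i ∈ A
  · have row : ∀ j, gossipMatrix A i j = if j ∈ A then 1 / (#A : ℝ) else 0 := fun j => by
      by_cases hj : j ∈ A <;> simp [gossipMatrix, hi, hj]
      rintro rfl; exact hj hi
    simp [mulVec, dotProduct, row, hi, div_eq_inv_mul, mul_sum]
  · simp [gossipMatrix, mulVec, dotProduct, hi]

theorem gossipMatrix_mul_self (A : Finset ι) :
    gossipMatrix A * gossipMatrix A = gossipMatrix A := by
  refine ext_iff_mulVec.2 fun v => funext fun i => ?_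
  rw [← mulVec_mulVec, gossipMatrix_mulVec_apply]
  split_ifs with hi
  · have hA : (#A : ℝ) ≠ 0 := by have := card_pos.2 ⟨i, hi⟩; positivity
    rw [sum_congr rfl fun j hj => by rw [gossipMatrix_mulVec_apply, if_pos hj],
      gossipMatrix_mulVec_apply, if_pos hi, sum_const, nsmul_eq_mul]
    field_simp
  · rfl

theorem dotProduct_gossipMatrix_mulVec (A : Finset ι) (v : ι → ℝ) :
    v ⬝ᵥ (gossipMatrix A *ᵥ v)
      = ∑ i, v i ^ 2 - (∑ i ∈ A, ∑ j ∈ A, (v i - v j) ^ 2) / (2 * #A) := by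
  simp only [dotProduct, gossipMatrix_mulVec_apply, mul_ite]
  rw [sum_ite, filter_mem_eq_inter, univ_inter, ← sum_mul, ← sum_compl_add_sum A,
    show univ.filter (· ∉ A) = Aᶜ by ext; simp, ← sum_sq_sub_sq_sum_div_card]
  simp only [← sq]
  ring

noncomputable def subsetWeight (p : ι → ℝ) (A : Finset ι) : ℝ :=
  (∏ i ∈ A, p i) * ∏ i ∈ Aᶜ, (1 - p i)

theorem subsetWeight_nonneg {p : ι → ℝ} (hp : ∀ i, 0 ≤ p i ∧ p i ≤ 1) (A : Finset ι) :
    0 ≤ subsetWeight p A :=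
  mul_nonneg (prod_nonneg fun i _ => (hp i).1) (prod_nonneg fun i _ => sub_nonneg.2 (hp i).2)

/-- Expand `∏ i, (p i + g i)` with `g = 1 - p` off `S` and `g = 0` on `S`: the subsets not
containing `S` drop out. -/
theorem sum_subsetWeight_filter_subset (p : ι → ℝ) (S : Finset ι) :
    ∑ A with S ⊆ A, subsetWeight p A = ∏ i ∈ S, p i := by
  set g : ι → ℝ := fun i => if i ∈ S then 0 else 1 - p i
  have hg (A : Finset ι) :
      ∏ i ∈ Aᶜ, g i = if S ⊆ A then ∏ i ∈ Aᶜ, (1 - p i) else 0 := by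
    split_ifs with hS
    · exact prod_congr rfl fun i hi => if_neg fun hiS => mem_compl.1 hi (hS hiS)
    · obtain ⟨i, hiS, hiA⟩ := not_subset.1 hS
      exact prod_eq_zero (mem_compl.2 hiA) (if_pos hiS)
  calc ∑ A with S ⊆ A, subsetWeight p A
      = ∑ A, (∏ i ∈ A, p i) * ∏ i ∈ univ \ A, g i := by
        simp only [sum_filter, ← compl_eq_univ_sdiff, hg, mul_ite, mul_zero, subsetWeight]
    _ = ∏ i, (p i + g i) := by rw [prod_add, powerset_univ]
    _ = ∏ i ∈ S, p i := by
        rw [← prod_ite_mem_eq S p]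
        exact prod_congr rfl fun i _ => by split_ifs <;> simp [g, *]

theorem sum_subsetWeight (p : ι → ℝ) : ∑ A, subsetWeight p A = 1 := by
  simpa using sum_subsetWeight_filter_subset p ∅

theorem sum_subsetWeight_mul_sum_sum (p : ι → ℝ) (f : ι → ι → ℝ) :
    ∑ A, subsetWeight p A * ∑ i ∈ A, ∑ j ∈ A, f i j
      = ∑ i, ∑ j, (∏ k ∈ {i, j}, p k) * f i j := by
  have hA (A : Finset ι) : subsetWeight p A * ∑ i ∈ A, ∑ j ∈ A, f i j
      = ∑ i, ∑ j, if {i, j} ⊆ A then subsetWeight p A * f i j else 0 := by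
    simp [mul_sum, insert_subset_iff, ite_and]
  simp only [← sum_subsetWeight_filter_subset, sum_filter, sum_mul, ite_mul, zero_mul, hA]
  rw [sum_comm]
  exact sum_congr rfl fun i _ => sum_comm

noncomputable def expectedGossipSq (p : ι → ℝ) : Matrix ι ι ℝ :=
  ∑ A, subsetWeight p A • (gossipMatrix A * gossipMatrix A)

theorem dotProduct_expectedGossipSq_mulVec (p : ι → ℝ) (v : ι → ℝ) :
    v ⬝ᵥ (expectedGossipSq p *ᵥ v) = ∑ i, v i ^ 2 -
      ∑ A, subsetWeight p A * ((∑ i ∈ A, ∑ j ∈ A, (v i - v j) ^ 2) / (2 * #A)) := by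
  simp only [expectedGossipSq, gossipMatrix_mul_self, sum_mulVec, dotProduct_sum,
    smul_mulVec, dotProduct_smul, smul_eq_mul, dotProduct_gossipMatrix_mulVec, mul_sub,
    sum_sub_distrib, ← sum_mul, sum_subsetWeight, one_mul]

theorem dotProduct_expectedGossipSq_mulVec_le {c : ℝ} (hc : 0 ≤ c) {p : ι → ℝ}
    (hp : ∀ i, c ≤ p i ∧ p i ≤ 1) {v : ι → ℝ} (hv : ∑ i, v i = 0) :
    v ⬝ᵥ (expectedGossipSq p *ᵥ v) ≤ (1 - c ^ 2) * ∑ i, v i ^ 2 := by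
  set n : ℝ := (Fintype.card ι : ℝ)
  have hsq : ∑ i, v i ^ 2 = (∑ i, ∑ j, (v i - v j) ^ 2) / (2 * n) := by
    simpa [hv] using sum_sq_sub_sq_sum_div_card univ v
  have hpair (i j : ι) : c ^ 2 * (v i - v j) ^ 2 ≤ (∏ k ∈ {i, j}, p k) * (v i - v j) ^ 2 := by
    obtain rfl | hij := eq_or_ne i j
    · simp
    rw [prod_pair hij, sq c]
    gcongr
    exacts [hc.trans (hp i).1, (hp i).1, (hp j).1]
  have hcard (A : Finset ι) : (∑ i ∈ A, ∑ j ∈ A, (v i - v j) ^ 2) / (2 * n)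
      ≤ (∑ i ∈ A, ∑ j ∈ A, (v i - v j) ^ 2) / (2 * #A) := by
    obtain rfl | hA := A.eq_empty_or_nonempty
    · simp
    gcongr
    exact Nat.cast_le.2 (card_le_univ A)
  have hdissipation : c ^ 2 * ∑ i, v i ^ 2
      ≤ ∑ A, subsetWeight p A * ((∑ i ∈ A, ∑ j ∈ A, (v i - v j) ^ 2) / (2 * #A)) :=
    calc c ^ 2 * ∑ i, v i ^ 2 = (∑ i, ∑ j, c ^ 2 * (v i - v j) ^ 2) / (2 * n) := by
          rw [hsq]; simp only [← mul_sum]; ring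
      _ ≤ (∑ i, ∑ j, (∏ k ∈ {i, j}, p k) * (v i - v j) ^ 2) / (2 * n) := by
          gcongr ?_ / _
          exact sum_le_sum fun i _ => sum_le_sum fun j _ => hpair i j
      _ = ∑ A, subsetWeight p A * ((∑ i ∈ A, ∑ j ∈ A, (v i - v j) ^ 2) / (2 * n)) := by
          rw [← sum_subsetWeight_mul_sum_sum, sum_div]; simp only [mul_div_assoc]
      _ ≤ _ := sum_le_sum fun A _ => mul_le_mul_of_nonneg_left (hcard A)
          (subsetWeight_nonneg (fun i => ⟨hc.trans (hp i).1, (hp i).2⟩) A)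
  rw [dotProduct_expectedGossipSq_mulVec]
  linarith

end

theorem expected_gossip_square_spectral_gap_general
    (m : ℕ) (c : ℝ) (hc0 : 0 < c) (hc1 : c ≤ 1)
    (p : Fin m → ℝ) (hp : ∀ i, c ≤ p i ∧ p i ≤ 1)
    (W : Finset (Fin m) → Matrix (Fin m) (Fin m) ℝ)
    (hW : ∀ A i j, W A i j =
      if i ∈ A ∧ j ∈ A then 1 / (A.card : ℝ)
      else if i = j then 1 else 0)
    (M : Matrix (Fin m) (Fin m) ℝ)
    (hM : M = ∑ A : Finset (Fin m),
      ((∏ i ∈ A, p i) * ∏ i ∈ Aᶜ, (1 - p i)) • (W A * W A))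
    (v : Fin m → ℝ) (hv : ∑ i, v i = 0) :
    ∑ i, ∑ j, v i * M i j * v j ≤
      (1 - c ^ 4 * (1 - (1 - c) ^ m) ^ 2 / 8) * ∑ i, v i ^ 2 := by
  obtain rfl : W = gossipMatrix := funext fun A => Matrix.ext (hW A)
  obtain rfl : M = expectedGossipSq p := hM
  have hconst : c ^ 4 * (1 - (1 - c) ^ m) ^ 2 / 8 ≤ c ^ 2 := by
    have h0 : 0 ≤ (1 - c) ^ m := pow_nonneg (by linarith) m
    have h1 : (1 - c) ^ m ≤ 1 := pow_le_one₀ (by linarith) (by linarith)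
    have h2 : c ^ 4 * (1 - (1 - c) ^ m) ^ 2 ≤ c ^ 4 :=
      mul_le_of_le_one_right (by positivity) (pow_le_one₀ (by linarith) (by linarith))
    have h4 : c ^ 4 ≤ c ^ 2 := pow_le_pow_of_le_one hc0.le hc1 (by norm_num)
    linarith [pow_nonneg hc0.le 4]
  calc ∑ i, ∑ j, v i * expectedGossipSq p i j * v j
      = v ⬝ᵥ (expectedGossipSq p *ᵥ v) := by
        simp only [dotProduct, mulVec, mul_sum, mul_assoc]
    _ ≤ (1 - c ^ 2) * ∑ i, v i ^ 2 := dotProduct_expectedGossipSq_mulVec_le hc0.le hp hv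
    _ ≤ _ := by gcongr

/-- Ergodicity lemma (Lemma 3): the second largest eigenvalue of
`M = E[W²]` satisfies `ρ ≤ 1 - c⁴(1-(1-c)^m)²/8`, expressed via the quadratic
form of `M` on mean-zero vectors. -/
theorem expected_gossip_square_spectral_gap
    (m : ℕ) (hm : 1 ≤ m) (c : ℝ) (hc0 : 0 < c) (hc1 : c ≤ 1)
    (p : Fin m → ℝ) (hp : ∀ i, c ≤ p i ∧ p i ≤ 1)
    (W : Finset (Fin m) → Matrix (Fin m) (Fin m) ℝ)
    (hW : ∀ A i j, W A i j =
      if i ∈ A ∧ j ∈ A then 1 / (A.card : ℝ)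
      else if i = j then 1 else 0)
    (M : Matrix (Fin m) (Fin m) ℝ)
    (hM : M = ∑ A : Finset (Fin m),
      ((∏ i ∈ A, p i) * ∏ i ∈ Aᶜ, (1 - p i)) • (W A * W A))
    (v : Fin m → ℝ) (hv : ∑ i, v i = 0) :
    ∑ i, ∑ j, v i * M i j * v j ≤
      (1 - c ^ 4 * (1 - (1 - c) ^ m) ^ 2 / 8) * ∑ i, v i ^ 2 :=
  expected_gossip_square_spectral_gap_general m c hc0 hc1 p hp W hW M hM v hv
end
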